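/- Let G be a simple graph with minimum degree at least 4, let S be a set of vertices, and let 0 < ε ≤ 1. Let N_{≥2} denote the set of vertices outside S having at least 2 neighbours in S. If the number of edges induced by S ∪ N_{≥2} is at most (1 + ε/2)·|S ∪ N_{≥2}|, then |N(S)| ≥ (2 − ε)|S|, where N(S) is the set of vertices outside S having at least one neighbour in S. -/

import Mathlib

/-!
Write `c(u)` for the number of neighbours of `u` in `S`, and `N₁ = N_{≥1} \ N_{≥2}`. Counting the
edges leaving `S` from both ends, `4|S| ≤ ∑_{v ∈ S} deg v = 2e(S) + |N₁| + ∑_{u ∈ N_{≥2}} c(u)`.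
On the other hand `e(S ∪ N_{≥2}) ≥ e(S) + ∑_{u ∈ N_{≥2}} c(u)` and `c(u) ≥ 2` on `N_{≥2}`, so
`4|S| + 2|N_{≥2}| ≤ 2e(S ∪ N_{≥2}) + |N₁| ≤ (2 + ε)(|S| + |N_{≥2}|) + |N₁|`. Rearranging,
`(2 - ε)|S| ≤ |N₁| + ε|N_{≥2}| ≤ |N₁| + |N_{≥2}| = |N(S)|`.
-/

open Finset

/-- Number of edges of `G` with both endpoints in `S`. -/
def edgesWithin {V : Type*} [Fintype V] [DecidableEq V]
    (G : SimpleGraph V) [DecidableRel G.Adj] (S : Finset V) : ℕ :=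
  (G.edgeFinset.filter (fun e => ∀ v, v ∈ e → v ∈ S)).card

namespace SimpleGraph

variable {V : Type*} (G : SimpleGraph V) [DecidableRel G.Adj]

theorem sum_card_filter_adj_comm (X Y : Finset V) :
    ∑ v ∈ X, #{u ∈ Y | G.Adj v u} = ∑ u ∈ Y, #{v ∈ X | G.Adj u v} := by
  simpa only [bipartiteAbove, bipartiteBelow, G.adj_comm] using
    sum_card_bipartiteAbove_eq_sum_card_bipartiteBelow (s := X) (t := Y) (r := G.Adj)

variable [Fintype V] [DecidableEq V]

theorem edgesWithin_eq_card_edgeFinset_induce (A : Finset V) :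
    edgesWithin G A = #(G.induce (A : Set V)).edgeFinset := by
  rw [edgesWithin, ← card_map (Function.Embedding.subtype _).sym2Map]
  convert congrArg card (map_edgeFinset_induce (G := G) (s := (A : Set V))).symm using 2
  · ext e
    simp [mem_sym2_iff]
  · congr!

theorem two_mul_edgesWithin (A : Finset V) :
    2 * edgesWithin G A = ∑ v ∈ A, #{u ∈ A | G.Adj v u} := by
  rw [edgesWithin_eq_card_edgeFinset_induce, ← sum_degrees_eq_twice_card_edges, ← sum_coe_sort A]
  refine Fintype.sum_equiv (Equiv.refl _) _ _ fun v => ?_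
  rw [← card_neighborFinset_eq_degree, ← card_map (Function.Embedding.subtype _)]
  convert congrArg card (map_neighborFinset_induce (G := G) (s := (A : Set V)) v) using 2
  · congr!
  · ext u
    simp only [mem_inter, mem_neighborFinset, Set.mem_toFinset, mem_coe]
    exact mem_filter.trans and_comm

theorem edgesWithin_add_sum_le_edgesWithin_union {A B : Finset V} (hAB : Disjoint A B) :
    edgesWithin G A + ∑ u ∈ B, #{v ∈ A | G.Adj u v} ≤ edgesWithin G (A ∪ B) := by
  have hsplit (v : V) :
      #{u ∈ A ∪ B | G.Adj v u} = #{u ∈ A | G.Adj v u} + #{u ∈ B | G.Adj v u} := by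
    rw [filter_union, card_union_of_disjoint (disjoint_filter_filter hAB)]
  have hdouble := two_mul_edgesWithin G (A ∪ B)
  rw [sum_union hAB] at hdouble
  simp only [hsplit, sum_add_distrib] at hdouble
  have hcross := sum_card_filter_adj_comm G A B
  have hA := two_mul_edgesWithin G A
  omega

-- The set `N_{≥k}` of the paper.
def nbhdGE (S : Finset V) (k : ℕ) : Finset V :=
  {v | v ∉ S ∧ k ≤ #{u ∈ S | G.Adj v u}}

variable {G}

theorem mem_nbhdGE {S : Finset V} {k : ℕ} {v : V} :
    v ∈ G.nbhdGE S k ↔ v ∉ S ∧ k ≤ #{u ∈ S | G.Adj v u} := by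
  simp [nbhdGE]

theorem disjoint_nbhdGE (S : Finset V) (k : ℕ) : Disjoint S (G.nbhdGE S k) :=
  disjoint_right.2 fun _ hv => (mem_nbhdGE.1 hv).1

theorem nbhdGE_anti (S : Finset V) {k l : ℕ} (hkl : k ≤ l) : G.nbhdGE S l ⊆ G.nbhdGE S k :=
  fun _ hv => mem_nbhdGE.2 ⟨(mem_nbhdGE.1 hv).1, hkl.trans (mem_nbhdGE.1 hv).2⟩

theorem nbhdGE_one (S : Finset V) :
    G.nbhdGE S 1 = ({v | v ∉ S ∧ ∃ u ∈ S, G.Adj v u} : Finset V) := by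
  ext v
  simp [mem_nbhdGE, Nat.one_le_iff_ne_zero]

theorem mul_card_nbhdGE_le_sum (S : Finset V) (k : ℕ) :
    k * #(G.nbhdGE S k) ≤ ∑ u ∈ G.nbhdGE S k, #{v ∈ S | G.Adj u v} := by
  rw [mul_comm, ← smul_eq_mul]
  exact card_nsmul_le_sum _ _ _ fun _ hu => (mem_nbhdGE.1 hu).2

theorem sum_degree_eq_two_mul_edgesWithin_add (S : Finset V) :
    ∑ v ∈ S, G.degree v
      = 2 * edgesWithin G S + ∑ u ∈ G.nbhdGE S 1, #{v ∈ S | G.Adj u v} := by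
  have houtside : ∑ u ∈ Sᶜ, #{v ∈ S | G.Adj u v} = ∑ u ∈ G.nbhdGE S 1, #{v ∈ S | G.Adj u v} := by
    refine (sum_subset (fun u hu => mem_compl.2 (mem_nbhdGE.1 hu).1) fun u hu hu1 => ?_).symm
    simpa [mem_nbhdGE, mem_compl.1 hu] using hu1
  simp_rw [← card_neighborFinset_eq_degree, neighborFinset_eq_filter]
  rw [sum_card_filter_adj_comm, ← sum_add_sum_compl S, two_mul_edgesWithin, houtside]

theorem sum_nbhdGE_one_eq (S : Finset V) :
    ∑ u ∈ G.nbhdGE S 1, #{v ∈ S | G.Adj u v}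
      = #(G.nbhdGE S 1 \ G.nbhdGE S 2) + ∑ u ∈ G.nbhdGE S 2, #{v ∈ S | G.Adj u v} := by
  rw [← sum_sdiff (nbhdGE_anti S one_le_two), card_eq_sum_ones]
  congr 1
  refine sum_congr rfl fun u hu => ?_
  obtain ⟨hu1, hu2⟩ := mem_sdiff.1 hu
  obtain ⟨huS, hpos⟩ := mem_nbhdGE.1 hu1
  have hlt : ¬2 ≤ #{v ∈ S | G.Adj u v} := fun h => hu2 (mem_nbhdGE.2 ⟨huS, h⟩)
  omega

theorem mul_card_add_two_mul_card_nbhdGE_two_le {S : Finset V} {d : ℕ}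
    (hdeg : ∀ v ∈ S, d ≤ G.degree v) :
    d * #S + 2 * #(G.nbhdGE S 2)
      ≤ 2 * edgesWithin G (S ∪ G.nbhdGE S 2) + #(G.nbhdGE S 1 \ G.nbhdGE S 2) := by
  have hdegsum : d * #S ≤ ∑ v ∈ S, G.degree v := by
    rw [mul_comm, ← smul_eq_mul]
    exact card_nsmul_le_sum _ _ _ hdeg
  rw [sum_degree_eq_two_mul_edgesWithin_add, sum_nbhdGE_one_eq] at hdegsum
  have hunion := G.edgesWithin_add_sum_le_edgesWithin_union (disjoint_nbhdGE (G := G) S 2)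
  have htwo := mul_card_nbhdGE_le_sum (G := G) S 2
  omega

end SimpleGraph

open SimpleGraph in
theorem stmt_5_general {V : Type*} [Fintype V] [DecidableEq V]
    (G : SimpleGraph V) [DecidableRel G.Adj]
    (hdeg : ∀ v, 4 ≤ G.degree v)
    (S : Finset V) (ε : ℝ) (hε1 : ε ≤ 1)
    -- `N2` is the set of vertices outside `S` with at least 2 neighbours in `S`
    (N2 : Finset V)
    (hN2 : N2 = Finset.univ.filter
      (fun v => v ∉ S ∧ 2 ≤ (S.filter (fun u => G.Adj v u)).card))
    -- `NS` is the set of vertices outside `S` with at least one neighbour in `S`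
    (NS : Finset V)
    (hNS : NS = Finset.univ.filter (fun v => v ∉ S ∧ ∃ u ∈ S, G.Adj v u))
    (h : (edgesWithin G (S ∪ N2) : ℝ) ≤ (1 + ε / 2) * (S ∪ N2).card) :
    (2 - ε) * S.card ≤ (NS.card : ℝ) := by
  obtain rfl : N2 = G.nbhdGE S 2 := hN2
  obtain rfl : NS = G.nbhdGE S 1 := hNS.trans (nbhdGE_one S).symm
  have key : (4 * #S + 2 * #(G.nbhdGE S 2) : ℝ)
      ≤ 2 * edgesWithin G (S ∪ G.nbhdGE S 2) + #(G.nbhdGE S 1 \ G.nbhdGE S 2) := by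
    exact_mod_cast mul_card_add_two_mul_card_nbhdGE_two_le fun v _ => hdeg v
  have hcard : (#(G.nbhdGE S 1 \ G.nbhdGE S 2) + #(G.nbhdGE S 2) : ℝ) = #(G.nbhdGE S 1) := by
    exact_mod_cast card_sdiff_add_card_eq_card (nbhdGE_anti S one_le_two)
  rw [card_union_of_disjoint (disjoint_nbhdGE S 2), Nat.cast_add] at h
  nlinarith [mul_nonneg (sub_nonneg.2 hε1) (Nat.cast_nonneg (α := ℝ) #(G.nbhdGE S 2))]

theorem stmt_5 {V : Type*} [Fintype V] [DecidableEq V]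
    (G : SimpleGraph V) [DecidableRel G.Adj]
    (hdeg : ∀ v, 4 ≤ G.degree v)
    (S : Finset V) (ε : ℝ) (hε0 : 0 < ε) (hε1 : ε ≤ 1)
    -- `N2` is the set of vertices outside `S` with at least 2 neighbours in `S`
    (N2 : Finset V)
    (hN2 : N2 = Finset.univ.filter
      (fun v => v ∉ S ∧ 2 ≤ (S.filter (fun u => G.Adj v u)).card))
    -- `NS` is the set of vertices outside `S` with at least one neighbour in `S`
    (NS : Finset V)
    (hNS : NS = Finset.univ.filter (fun v => v ∉ S ∧ ∃ u ∈ S, G.Adj v u))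
    (h : (edgesWithin G (S ∪ N2) : ℝ) ≤ (1 + ε / 2) * (S ∪ N2).card) :
    (2 - ε) * S.card ≤ (NS.card : ℝ) :=
  stmt_5_general G hdeg S ε hε1 N2 hN2 NS hNS h
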